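/- arXiv:2401.01030 — 4 statements merged into one kernel-verified Lean document; each statement's English description precedes it below -/
import Mathlib

section
/- Let s, t, n_1, …, n_t be positive integers with t ≥ 2 and n_1 ≤ n_2 ≤ ⋯ ≤ n_t, and let G = K_s ∨ (K_{n_1} ∪ K_{n_2} ∪ ⋯ ∪ K_{n_t}). Let x be a positive eigenvector of the adjacency matrix of G corresponding to the spectral radius ρ(G). Then for any indices 1 ≤ i ≤ j ≤ t, any vertex u of the i-th inner copy K_{n_i}, and any vertex v of the j-th inner copy K_{n_j}, one has x_u ≤ x_v. -/
/-- Adjacency matrix over ℝ (with classical decidability of adjacency). -/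
noncomputable def adjMat {V : Type*} [Fintype V] [DecidableEq V] (G : SimpleGraph V) :
    Matrix V V ℝ :=
  letI := Classical.decRel G.Adj
  G.adjMatrix ℝ

/-- Degree diagonal matrix over ℝ. -/
noncomputable def degMat {V : Type*} [Fintype V] [DecidableEq V] (G : SimpleGraph V) :
    Matrix V V ℝ :=
  letI := Classical.decRel G.Adj
  Matrix.diagonal fun v => (G.degree v : ℝ)

/-- The spectral radius of a graph: the largest eigenvalue of its adjacency matrix. -/
noncomputable def grho {V : Type*} [Fintype V] [DecidableEq V] (G : SimpleGraph V) : ℝ :=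
  sSup (spectrum ℝ (adjMat G))

/-- The signless Laplacian spectral radius of a graph: the largest eigenvalue of D(G) + A(G). -/
noncomputable def gq {V : Type*} [Fintype V] [DecidableEq V] (G : SimpleGraph V) : ℝ :=
  sSup (spectrum ℝ (degMat G + adjMat G))

/-- The graph `K_s ∨ (m K_r ∪ K_{n - s - m*r})` on `Fin n`:
vertices `< s` form the out clique joined to everything, the next `m*r` vertices form
`m` disjoint copies of `K_r`, and the remaining vertices form a clique. -/
def Hgen (n s m r : ℕ) : SimpleGraph (Fin n) where
  Adj u v := u ≠ v ∧ ((u : ℕ) < s ∨ (v : ℕ) < s ∨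
    (s + m * r ≤ (u : ℕ) ∧ s + m * r ≤ (v : ℕ)) ∨
    (s ≤ (u : ℕ) ∧ s ≤ (v : ℕ) ∧ (u : ℕ) < s + m * r ∧ (v : ℕ) < s + m * r ∧
      ((u : ℕ) - s) / r = ((v : ℕ) - s) / r))
  symm := by
    constructor
    rintro u v ⟨h1, h2⟩
    refine ⟨h1.symm, ?_⟩
    rcases h2 with h | h | ⟨h, h'⟩ | ⟨h1', h2', h3', h4', h5'⟩
    · exact Or.inr (Or.inl h)
    · exact Or.inl h
    · exact Or.inr (Or.inr (Or.inl ⟨h', h⟩))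
    · exact Or.inr (Or.inr (Or.inr ⟨h2', h1', h4', h3', h5'.symm⟩))
  loopless := by constructor; rintro u ⟨h1, -⟩; exact h1 rfl

/-- `K_δ ∨ ((δ-k+1) K_1 ∪ K_{n-2δ+k-1})`. -/
def Hndk (n δ k : ℕ) : SimpleGraph (Fin n) := Hgen n δ (δ - k + 1) 1

/-- A graph is `k`-factor-critical if deleting any `k` vertices leaves a graph
with a perfect matching. -/
def kFactorCritical {V : Type*} [Fintype V] (G : SimpleGraph V) (k : ℕ) : Prop :=
  ∀ S : Finset V, S.card = k →
    ∃ M : (G.induce ((S : Set V)ᶜ)).Subgraph, M.IsPerfectMatching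


/-- The graph `K_s ∨ (K_{n_1} ∪ ⋯ ∪ K_{n_t})`: the vertices `Sum.inl a` form the out copy
`K_s` joined to everything, and for each `i : Fin t` the vertices `Sum.inr ⟨i, _⟩` form the
`i`-th inner copy `K_{n_i}`. -/
def outerInner (s t : ℕ) (nn : Fin t → ℕ) :
    SimpleGraph (Fin s ⊕ Σ i : Fin t, Fin (nn i)) where
  Adj u v := u ≠ v ∧ (u.isLeft = true ∨ v.isLeft = true ∨
    ∃ (i : Fin t) (a b : Fin (nn i)), u = Sum.inr ⟨i, a⟩ ∧ v = Sum.inr ⟨i, b⟩)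
  symm := by
    constructor
    rintro u v ⟨h1, h2⟩
    refine ⟨h1.symm, ?_⟩
    rcases h2 with h | h | ⟨i, a, b, rfl, rfl⟩
    · exact Or.inr (Or.inl h)
    · exact Or.inl h
    · exact Or.inr (Or.inr ⟨i, b, a, rfl, rfl⟩)
  loopless := by constructor; rintro u ⟨h1, -⟩; exact h1 rfl

/-!
An eigenvector `x` of `K_s ∨ (K_{n_1} ∪ ⋯ ∪ K_{n_t})` for the eigenvalue `ρ` satisfies, at a
vertex `v` of the `i`-th inner copy, `ρ x_v = S + T_i - x_v`, where `S` is the sum of `x` over the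
out copy and `T_i` its sum over the `i`-th inner copy. The right-hand side of
`(ρ + 1) x_v = S + T_i` does not depend on `v`, so `x` is constant on each inner copy, and then
`(ρ + 1 - n_i) x_v = S`. For positive `x` and `s ≥ 1` this gives `x_v = S / (ρ + 1 - n_i)` with a
positive denominator, which increases with `n_i`.
-/

open Matrix

lemma le_of_mul_eq_mul_of_le {α : Type*} [Semiring α] [LinearOrder α] [IsStrictOrderedRing α]
    {c d y z : α} (h : c * y = d * z) (hpos : 0 < c * y) (hy : 0 < y) (hz : 0 ≤ z)
    (hdc : d ≤ c) : y ≤ z :=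
  le_of_mul_le_mul_left (h ▸ mul_le_mul_of_nonneg_right hdc hz) (pos_of_mul_pos_left hpos hy.le)

namespace outerInner

variable {s t : ℕ} {nn : Fin t → ℕ}

lemma adj_inr_inl (p : Σ i : Fin t, Fin (nn i)) (b : Fin s) :
    (outerInner s t nn).Adj (Sum.inr p) (Sum.inl b) :=
  ⟨Sum.inr_ne_inl, Or.inr (Or.inl rfl)⟩

lemma adj_inr_inr_iff {i : Fin t} (a c : Fin (nn i)) :
    (outerInner s t nn).Adj (Sum.inr ⟨i, a⟩) (Sum.inr ⟨i, c⟩) ↔ a ≠ c := by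
  refine ⟨fun h hac => h.1 (hac ▸ rfl), fun hac => ⟨?_, Or.inr (Or.inr ⟨i, a, c, rfl, rfl⟩)⟩⟩
  simpa using hac

lemma not_adj_inr_inr {i j : Fin t} (hij : i ≠ j) (a : Fin (nn i)) (c : Fin (nn j)) :
    ¬ (outerInner s t nn).Adj (Sum.inr ⟨i, a⟩) (Sum.inr ⟨j, c⟩) := by
  rintro ⟨-, h | h | ⟨k, a', c', hu, hv⟩⟩
  · simp at h
  · simp at h
  · simp only [Sum.inr.injEq, Sigma.mk.inj_iff] at hu hv
    exact hij (hu.1.trans hv.1.symm)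

lemma adjMat_mulVec_inr (x : Fin s ⊕ (Σ i : Fin t, Fin (nn i)) → ℝ) (i : Fin t)
    (a : Fin (nn i)) :
    (adjMat (outerInner s t nn) *ᵥ x) (Sum.inr ⟨i, a⟩) =
      ∑ b, x (Sum.inl b) + (∑ c, x (Sum.inr ⟨i, c⟩) - x (Sum.inr ⟨i, a⟩)) := by
  classical
  simp only [adjMat, mulVec, dotProduct, SimpleGraph.adjMatrix_apply, ite_mul, one_mul,
    zero_mul, Fintype.sum_sum_type, adj_inr_inl, if_true]
  congr 1
  rw [← Finset.univ_sigma_univ, Finset.sum_sigma, Finset.sum_eq_single i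
    (fun j _ hji => Finset.sum_eq_zero fun c _ => if_neg (not_adj_inr_inr hji.symm a c))
    (fun h => absurd (Finset.mem_univ i) h)]
  simp only [adj_inr_inr_iff, ← Finset.sum_filter, Finset.filter_ne,
    Finset.sum_erase_eq_sub (Finset.mem_univ a)]

variable {x : Fin s ⊕ (Σ i : Fin t, Fin (nn i)) → ℝ} {ρ : ℝ}

lemma add_one_mul_apply_inr (heig : adjMat (outerInner s t nn) *ᵥ x = ρ • x) (i : Fin t)
    (a : Fin (nn i)) :
    (ρ + 1) * x (Sum.inr ⟨i, a⟩) = ∑ b, x (Sum.inl b) + ∑ c, x (Sum.inr ⟨i, c⟩) := by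
  have h := congrFun heig (Sum.inr ⟨i, a⟩)
  rw [adjMat_mulVec_inr, Pi.smul_apply, smul_eq_mul] at h
  linarith

lemma apply_inr_eq_apply_inr (hx : ∀ v, 0 < x v)
    (heig : adjMat (outerInner s t nn) *ᵥ x = ρ • x) (i : Fin t) (a c : Fin (nn i)) :
    x (Sum.inr ⟨i, a⟩) = x (Sum.inr ⟨i, c⟩) := by
  have hρ : 0 < ρ + 1 := by
    refine pos_of_mul_pos_left ?_ (hx (Sum.inr ⟨i, a⟩)).le
    rw [add_one_mul_apply_inr heig i a]
    exact add_pos_of_nonneg_of_pos (Finset.sum_nonneg fun b _ => (hx _).le)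
      (Finset.sum_pos (fun c _ => hx _) ⟨a, Finset.mem_univ a⟩)
  exact mul_left_cancel₀ hρ.ne'
    ((add_one_mul_apply_inr heig i a).trans (add_one_mul_apply_inr heig i c).symm)

lemma sub_mul_apply_inr (hx : ∀ v, 0 < x v)
    (heig : adjMat (outerInner s t nn) *ᵥ x = ρ • x) (i : Fin t) (a : Fin (nn i)) :
    (ρ + 1 - nn i) * x (Sum.inr ⟨i, a⟩) = ∑ b, x (Sum.inl b) := by
  have hT : ∑ c, x (Sum.inr ⟨i, c⟩) = nn i * x (Sum.inr ⟨i, a⟩) := by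
    simp [apply_inr_eq_apply_inr hx heig i _ a]
  linarith [add_one_mul_apply_inr heig i a]

end outerInner

theorem stmt_2_general (s t : ℕ) (hs : 1 ≤ s) (nn : Fin t → ℕ)
    (hmono : Monotone nn)
    (x : (Fin s ⊕ Σ i : Fin t, Fin (nn i)) → ℝ)
    (hx : ∀ v, 0 < x v)
    (heig : (adjMat (outerInner s t nn)).mulVec x = grho (outerInner s t nn) • x) :
    ∀ (i j : Fin t), i ≤ j → ∀ (a : Fin (nn i)) (b : Fin (nn j)),
      x (Sum.inr ⟨i, a⟩) ≤ x (Sum.inr ⟨j, b⟩) := by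
  intro i j hij a b
  have hS : 0 < ∑ k : Fin s, x (Sum.inl k) :=
    Finset.sum_pos (fun k _ => hx _) ⟨⟨0, hs⟩, Finset.mem_univ _⟩
  have hi := outerInner.sub_mul_apply_inr hx heig i a
  have hj := outerInner.sub_mul_apply_inr hx heig j b
  exact le_of_mul_eq_mul_of_le (hi.trans hj.symm) (hi ▸ hS) (hx _) (hx _).le
    (sub_le_sub_left (Nat.cast_le.mpr (hmono hij)) _)

/-- Lemma 2.4 (adjacency case): the Perron vector entries are monotone over the inner copies. -/
theorem stmt_2 (s t : ℕ) (hs : 1 ≤ s) (ht : 2 ≤ t) (nn : Fin t → ℕ)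
    (hpos : ∀ i : Fin t, 1 ≤ nn i) (hmono : Monotone nn)
    (x : (Fin s ⊕ Σ i : Fin t, Fin (nn i)) → ℝ)
    (hx : ∀ v, 0 < x v)
    (heig : (adjMat (outerInner s t nn)).mulVec x = grho (outerInner s t nn) • x) :
    ∀ (i j : Fin t), i ≤ j → ∀ (a : Fin (nn i)) (b : Fin (nn j)),
      x (Sum.inr ⟨i, a⟩) ≤ x (Sum.inr ⟨j, b⟩) :=
  stmt_2_general s t hs nn hmono x hx heig
end

section
/- Let δ, k, n be integers with δ ≥ 1, 0 ≤ k < δ, and n > 2δ−k+1. Then ρ(H(n,δ,k)) is equal to the largest real root of f(x) = 0, where f(x) = x³ − (n+k−δ−3)x² − (n+δ²−kδ+k−2)x − 2δ³ + (n+3k−4)δ² + (n+3k−nk−k²−2)δ and H(n,δ,k) = K_δ ∨ ((δ−k+1)K_1 ∪ K_{n−2δ+k−1}). -/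
/-!
The classes `K_s`, `m K_1`, `K_c` (with `c = n - s - m`) of `Hgen n s m 1` form an equitable
partition whose quotient matrix is `Q = [[s-1, m, c], [s, 0, 0], [s, 0, c-1]]`, so lifting
eigenvectors of `Q` to block-constant vectors shows that every eigenvalue of `Q` is an eigenvalue
of the adjacency matrix `A`, hence is at most `ρ`. Conversely, two vertices of `K_s` or of `K_c`
have the same closed neighbourhood and two vertices of `m K_1` the same open neighbourhood, so an
eigenvector of `A` for an eigenvalue other than `0` and `-1` is block-constant and descends to
`Q`. Since `A` is a nonzero traceless symmetric matrix, `ρ > 0`, so `ρ` is an eigenvalue of `Q`.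
The characteristic polynomial of `Q` is the cubic `f`.
-/

open Finset Matrix

namespace Matrix

variable {n : Type*} [Fintype n]

theorem mem_spectrum_iff_exists_mulVec_eq_smul [DecidableEq n] {K : Type*} [Field K]
    (A : Matrix n n K) (μ : K) : μ ∈ spectrum K A ↔ ∃ v ≠ 0, A *ᵥ v = μ • v := by
  rw [spectrum.mem_iff, isUnit_iff_isUnit_det, isUnit_iff_ne_zero, not_not,
    ← exists_mulVec_eq_zero_iff]
  simp only [sub_mulVec, Algebra.algebraMap_eq_smul_one, smul_mulVec, one_mulVec, sub_eq_zero,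
    eq_comm]

theorem IsHermitian.exists_pos_mem_spectrum [DecidableEq n] {𝕜 : Type*} [RCLike 𝕜]
    {A : Matrix n n 𝕜} (hA : A.IsHermitian) (htr : A.trace = 0) (hA0 : A ≠ 0) :
    ∃ μ ∈ spectrum ℝ A, 0 < μ := by
  simp only [hA.spectrum_real_eq_range_eigenvalues, Set.exists_range_iff]
  by_contra! hle
  have hsum : ∑ i, hA.eigenvalues i = 0 := by
    exact_mod_cast hA.trace_eq_sum_eigenvalues.symm.trans htr
  have hzero : hA.eigenvalues = 0 :=
    funext fun i => (sum_eq_zero_iff_of_nonpos fun i _ => hle i).1 hsum i (mem_univ i)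
  exact hA0 (hA.eigenvalues_eq_zero_iff.1 hzero)

theorem apply_eq_of_mulVec_eq_smul_of_row_eq {K : Type*} [Field K] {A : Matrix n n K}
    {v : n → K} {μ : K} (hv : A *ᵥ v = μ • v) (hμ : μ ≠ 0) {i j : n} (hij : A i = A j) :
    v i = v j := by
  have hi := congrFun hv i
  have hj := congrFun hv j
  simp only [mulVec, Pi.smul_apply, smul_eq_mul, hij] at hi hj
  exact mul_left_cancel₀ hμ (hi.symm.trans hj)

end Matrix

namespace SimpleGraph

variable {V : Type*} [Fintype V] [DecidableEq V] (G : SimpleGraph V)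

theorem adjMat_eq_adjMatrix [DecidableRel G.Adj] : adjMat G = G.adjMatrix ℝ := by
  unfold adjMat
  congr

theorem adjMat_apply [DecidableRel G.Adj] (u w : V) :
    adjMat G u w = if G.Adj u w then 1 else 0 := by
  rw [adjMat_eq_adjMatrix, adjMatrix_apply]

theorem isHermitian_adjMat : (adjMat G).IsHermitian := by
  classical
  rw [adjMat_eq_adjMatrix]
  exact G.isHermitian_adjMatrix ℝ

theorem trace_adjMat : (adjMat G).trace = 0 := by
  classical
  rw [adjMat_eq_adjMatrix]
  exact G.trace_adjMatrix ℝ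

variable {G}

theorem adjMat_ne_zero {u w : V} (h : G.Adj u w) : adjMat G ≠ 0 := by
  classical
  intro h0
  simpa [adjMat_apply, h] using congrFun (congrFun h0 u) w

theorem eigenvector_apply_eq_of_adj_iff {v : V → ℝ} {μ : ℝ} (hv : adjMat G *ᵥ v = μ • v)
    (hμ : μ ≠ 0) {u u' : V} (h : ∀ w, G.Adj u w ↔ G.Adj u' w) : v u = v u' := by
  classical
  exact Matrix.apply_eq_of_mulVec_eq_smul_of_row_eq hv hμ <| funext fun w => by
    simp only [adjMat_apply, h]

theorem eigenvector_apply_eq_of_adj_or_eq_iff {v : V → ℝ} {μ : ℝ} (hv : adjMat G *ᵥ v = μ • v)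
    (hμ : μ ≠ -1) {u u' : V} (h : ∀ w, G.Adj u w ∨ u = w ↔ G.Adj u' w ∨ u' = w) :
    v u = v u' := by
  classical
  have hv' : (adjMat G + 1) *ᵥ v = (μ + 1) • v := by
    rw [add_mulVec, hv, one_mulVec, add_smul, one_smul]
  refine Matrix.apply_eq_of_mulVec_eq_smul_of_row_eq hv' (by grind) <| funext fun w => ?_
  have hw := h w
  simp only [Matrix.add_apply, adjMat_apply, one_apply]
  by_cases hu : u = w <;> by_cases hu' : u' = w <;> simp_all

variable [DecidableRel G.Adj] {ι : Type*} [Fintype ι] [DecidableEq ι]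

variable (G) in
def IsEquitable (p : V → ι) (B : Matrix ι ι ℝ) : Prop :=
  ∀ u j, (#{w | G.Adj u w ∧ p w = j} : ℝ) = B (p u) j

theorem adjMat_mulVec_comp {p : V → ι} {B : Matrix ι ι ℝ} (hB : G.IsEquitable p B) (x : ι → ℝ) :
    adjMat G *ᵥ (x ∘ p) = (B *ᵥ x) ∘ p := by
  ext u
  calc (adjMat G *ᵥ (x ∘ p)) u = ∑ w ∈ {w | G.Adj u w}, x (p w) := by
        simp [mulVec, dotProduct, adjMat_apply, sum_filter]
    _ = ∑ j, ∑ w ∈ {w | G.Adj u w ∧ p w = j}, x j := by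
        rw [← sum_fiberwise _ p]
        refine sum_congr rfl fun j _ => ?_
        rw [filter_filter]
        exact sum_congr rfl fun w hw => by rw [(mem_filter.1 hw).2.2]
    _ = ((B *ᵥ x) ∘ p) u := by
        simp [mulVec, dotProduct, hB u]

theorem spectrum_subset_of_equitable {p : V → ι} (hp : Function.Surjective p)
    {B : Matrix ι ι ℝ} (hB : G.IsEquitable p B) :
    spectrum ℝ B ⊆ spectrum ℝ (adjMat G) := by
  intro μ hμ
  obtain ⟨x, hx0, hx⟩ := (Matrix.mem_spectrum_iff_exists_mulVec_eq_smul B μ).1 hμ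
  refine (Matrix.mem_spectrum_iff_exists_mulVec_eq_smul _ μ).2 ⟨x ∘ p, fun h => hx0 ?_, ?_⟩
  · exact funext fun j => by
      obtain ⟨u, rfl⟩ := hp j
      exact congrFun h u
  · rw [adjMat_mulVec_comp hB, hx]
    rfl

theorem mem_spectrum_of_equitable {p : V → ι} (hp : Function.Surjective p) {B : Matrix ι ι ℝ}
    (hB : G.IsEquitable p B) {μ : ℝ}
    (hμ : μ ∈ spectrum ℝ (adjMat G))
    (hconst : ∀ v : V → ℝ, adjMat G *ᵥ v = μ • v → ∀ u u', p u = p u' → v u = v u') :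
    μ ∈ spectrum ℝ B := by
  obtain ⟨v, hv0, hv⟩ := (Matrix.mem_spectrum_iff_exists_mulVec_eq_smul _ μ).1 hμ
  set x := v ∘ Function.surjInv hp
  have hvx : v = x ∘ p :=
    funext fun u => hconst v hv u _ (Function.surjInv_eq hp (p u)).symm
  refine (Matrix.mem_spectrum_iff_exists_mulVec_eq_smul B μ).2 ⟨x, fun hx0 => hv0 ?_, ?_⟩
  · rw [hvx, hx0]
    rfl
  · ext j
    obtain ⟨u, rfl⟩ := hp j
    simpa [hvx, adjMat_mulVec_comp hB] using congrFun hv u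

end SimpleGraph

instance (n s m r : ℕ) : DecidableRel (Hgen n s m r).Adj := fun u v => by
  unfold Hgen
  infer_instance

def blockIdx {n : ℕ} (s t : ℕ) (u : Fin n) : Fin 3 :=
  if (u : ℕ) < s then 0 else if (u : ℕ) < t then 1 else 2

/-- The quotient matrix of the partition of `Hgen n s m 1` into `K_s`, `m K_1` and `K_c`. -/
def quotMat (s m c : ℝ) : Matrix (Fin 3) (Fin 3) ℝ :=
  !![s - 1, m, c; s, 0, 0; s, 0, c - 1]

theorem mem_spectrum_quotMat_iff {s m c x : ℝ} :
    x ∈ spectrum ℝ (quotMat s m c) ↔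
      x * (x - s + 1) * (x - c + 1) - m * s * (x - c + 1) - c * s * x = 0 := by
  have hsub : algebraMap ℝ _ x - quotMat s m c =
      !![x - (s - 1), -m, -c; -s, x, 0; -s, 0, x - (c - 1)] := by
    ext i j
    fin_cases i <;> fin_cases j <;> simp [quotMat, algebraMap_matrix_apply]
  rw [spectrum.mem_iff, isUnit_iff_isUnit_det, isUnit_iff_ne_zero, not_not, hsub, det_fin_three]
  simp only [of_apply, cons_val', cons_val_zero, cons_val_one, cons_val_two, cons_val_fin_one,
    tail_cons, empty_val', vecHead]
  constructor <;> intro h <;> linear_combination h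

section

variable {n s m : ℕ}

theorem card_blockIdx_eq {t : ℕ} (hst : s ≤ t) (htn : t ≤ n) (j : Fin 3) :
    #{w : Fin n | blockIdx s t w = j} = ![s, t - s, n - t] j := by
  have hfib : ({w : Fin n | blockIdx s t w = j} : Finset (Fin n)).map Fin.valEmbedding =
      ![Ico 0 s, Ico s t, Ico t n] j := by
    ext i
    fin_cases j <;> simp [Fin.exists_iff, blockIdx] <;> grind
  rw [← card_map, hfib]
  fin_cases j <;> simp

theorem blockIdx_surjective (hs : 1 ≤ s) (hm : 1 ≤ m) (hn : s + m < n) :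
    Function.Surjective (blockIdx (n := n) s (s + m)) := by
  intro j
  fin_cases j
  · exact ⟨⟨0, by omega⟩, if_pos hs⟩
  · exact ⟨⟨s, by omega⟩, (if_neg (lt_irrefl s)).trans (if_pos (by simp; omega))⟩
  · exact ⟨⟨s + m, hn⟩, (if_neg (by simp)).trans (if_neg (lt_irrefl _))⟩

theorem hgen_one_adj_iff (u w : Fin n) :
    (Hgen n s m 1).Adj u w ↔ u ≠ w ∧ (blockIdx s (s + m) u = 0 ∨ blockIdx s (s + m) w = 0 ∨
      (blockIdx s (s + m) u = 2 ∧ blockIdx s (s + m) w = 2)) := by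
  simp only [Hgen, blockIdx, mul_one, Nat.div_one]
  split_ifs <;> simp <;> omega

theorem isEquitable_hgen_one_blockIdx (hs : 1 ≤ s) (hn : s + m < n) :
    (Hgen n s m 1).IsEquitable (blockIdx s (s + m)) (quotMat s m (n - s - m : ℕ)) := by
  intro u j
  set p : Fin n → Fin 3 := blockIdx s (s + m)
  have hfil : ({w | (Hgen n s m 1).Adj u w ∧ p w = j} : Finset (Fin n)) =
      (({w | p w = j} : Finset (Fin n)).filter
        (fun _ => p u = 0 ∨ j = 0 ∨ (p u = 2 ∧ j = 2))).erase u := by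
    ext w
    simp only [hgen_one_adj_iff, mem_erase, mem_filter, mem_univ, true_and]
    grind
  have hsize : #{w | p w = j} = ![s, m, n - s - m] j := by
    rw [card_blockIdx_eq (by omega) hn.le, Nat.add_sub_cancel_left, Nat.sub_sub]
  have hu : u ∈ ({w | p w = j} : Finset (Fin n)) ↔ p u = j := by simp
  rw [hfil, card_erase_eq_ite, filter_const]
  generalize p u = i at hu
  fin_cases i <;> fin_cases j <;> simp_all [quotMat, Nat.cast_pred (by omega : 0 < n - s - m)]

theorem hgen_one_eigenvector_apply_eq_of_blockIdx_eq {v : Fin n → ℝ} {μ : ℝ}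
    (hv : adjMat (Hgen n s m 1) *ᵥ v = μ • v) (hμ0 : μ ≠ 0) (hμ1 : μ ≠ -1) {u u' : Fin n}
    (huu' : blockIdx s (s + m) u = blockIdx s (s + m) u') : v u = v u' := by
  by_cases h1 : blockIdx s (s + m) u = 1
  · refine SimpleGraph.eigenvector_apply_eq_of_adj_iff hv hμ0 fun w => ?_
    simp only [hgen_one_adj_iff]
    grind
  · refine SimpleGraph.eigenvector_apply_eq_of_adj_or_eq_iff hv hμ1 fun w => ?_
    simp only [hgen_one_adj_iff]
    grind

theorem isGreatest_spectrum_quotMat_grho_hgen (hs : 1 ≤ s) (hm : 1 ≤ m) (hn : s + m < n) :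
    IsGreatest (spectrum ℝ (quotMat s m (n - s - m : ℕ))) (grho (Hgen n s m 1)) := by
  have hB := isEquitable_hgen_one_blockIdx hs hn
  have hp := blockIdx_surjective hs hm hn
  have hfin := (adjMat (Hgen n s m 1)).finite_spectrum
  have hedge : (Hgen n s m 1).Adj ⟨0, by omega⟩ ⟨s, by omega⟩ :=
    ⟨by rw [Ne, Fin.mk.injEq]; omega, Or.inl hs⟩
  obtain ⟨μ, hμ, hμpos⟩ := (SimpleGraph.isHermitian_adjMat _).exists_pos_mem_spectrum
    (SimpleGraph.trace_adjMat _) (SimpleGraph.adjMat_ne_zero hedge)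
  have hρ : grho (Hgen n s m 1) ∈ spectrum ℝ (adjMat (Hgen n s m 1)) :=
    Set.Nonempty.csSup_mem ⟨μ, hμ⟩ hfin
  have hρpos : 0 < grho (Hgen n s m 1) := hμpos.trans_le (le_csSup hfin.bddAbove hμ)
  refine ⟨SimpleGraph.mem_spectrum_of_equitable hp hB hρ fun v hv u u' =>
      hgen_one_eigenvector_apply_eq_of_blockIdx_eq hv hρpos.ne' (by linarith), fun x hx => ?_⟩
  exact le_csSup hfin.bddAbove (SimpleGraph.spectrum_subset_of_equitable hp hB hx)

end

/-- Lemma 3.2 (adjacency case): `ρ(H(n,δ,k))` is the largest real root of `f`. -/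
theorem stmt_6 (n δ k : ℕ) (hδ : 1 ≤ δ) (hk : k < δ) (hn : (2 * δ : ℤ) - k + 1 < n) :
    IsGreatest {x : ℝ | x ^ 3 - ((n : ℝ) + (k : ℝ) - (δ : ℝ) - 3) * x ^ 2 - ((n : ℝ) + (δ : ℝ) ^ 2 - (k : ℝ) * (δ : ℝ) + (k : ℝ) - 2) * x - 2 * (δ : ℝ) ^ 3 + ((n : ℝ) + 3 * (k : ℝ) - 4) * (δ : ℝ) ^ 2 + ((n : ℝ) + 3 * (k : ℝ) - (n : ℝ) * (k : ℝ) - (k : ℝ) ^ 2 - 2) * (δ : ℝ) = 0} (grho (Hndk n δ k)) := by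
  unfold Hndk
  convert isGreatest_spectrum_quotMat_grho_hgen (n := n) hδ (Nat.le_add_left 1 (δ - k))
    (by omega) using 1
  ext x
  rw [Set.mem_ofPred_eq, mem_spectrum_quotMat_iff, Nat.cast_sub (by omega),
    Nat.cast_sub (by omega), Nat.cast_add, Nat.cast_sub hk.le]
  constructor <;> intro h <;> linear_combination h
end

section
/- Let s, k, n be integers with s ≥ 1, 0 ≤ k ≤ s, and n ≥ 2s−k+2. Then ρ(K_s ∨ ((s−k+1)K_1 ∪ K_{n−2s+k−1})) is equal to the largest real root of f_s(x) = 0, where f_s(x) = x³ − (n+k−s−3)x² − (n+s²−ks+k−2)x − 2s³ + (n+3k−4)s² + (n+3k−nk−k²−2)s. -/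
/-!
The vertices of `K_s ∨ (a K_1 ∪ K_b)`, `a = s - k + 1`, split into three classes, each a clique or
a coclique, any two of them completely joined or not joined at all. This partition is equitable,
with quotient matrix `B = [[s-1, a, b], [s, 0, 0], [s, 0, b-1]]` whose characteristic polynomial
is `f_s`, and eigenvectors of `B` lift to the graph, so every root of `f_s` is an adjacency
eigenvalue. Conversely, in the eigenvalue equation `(x + [class of u is a clique]) w u = ...` the
right-hand side depends only on the class of `u`, so for `x ∉ {0, -1}` every eigenvector is
constant on classes and `x` is an eigenvalue of `B`. As `f_s` has a nonnegative root, the largest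
adjacency eigenvalue is nonnegative, hence a root of `f_s` (when it is `0`, so is that root).
-/

open Finset Matrix

theorem Matrix.mem_spectrum_iff_exists_mulVec_eq_smul_s10 {n : Type*} [Fintype n] [DecidableEq n]
    (M : Matrix n n ℝ) (x : ℝ) : x ∈ spectrum ℝ M ↔ ∃ w ≠ 0, M *ᵥ w = x • w := by
  rw [spectrum.mem_iff, Algebra.algebraMap_eq_smul_one, isUnit_iff_isUnit_det, isUnit_iff_ne_zero,
    not_not, ← exists_mulVec_eq_zero_iff]
  simp only [sub_mulVec, smul_mulVec, one_mulVec, sub_eq_zero, eq_comm]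

theorem Fin.card_filter_le_val_and_val_lt {n lo hi : ℕ} (h : hi ≤ n) :
    #{u : Fin n | lo ≤ (u : ℕ) ∧ (u : ℕ) < hi} = hi - lo := by
  have : ({u : Fin n | lo ≤ (u : ℕ) ∧ (u : ℕ) < hi} : Finset (Fin n)) =
      (Ico lo hi).attachFin fun m hm => (mem_Ico.mp hm).2.trans_le h := by
    ext; simp
  rw [this, card_attachFin, Nat.card_Ico]

section Blowup

variable {V ι : Type*} [Fintype V] [DecidableEq ι]

def SimpleGraph.IsBlowup (G : SimpleGraph V) (π : V → ι) (R : ι → ι → Prop) : Prop :=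
  ∀ u v, G.Adj u v ↔ u ≠ v ∧ R (π u) (π v)

def fiberSum (π : V → ι) (w : V → ℝ) (j : ι) : ℝ := ∑ v with π v = j, w v

theorem fiberSum_comp (π : V → ι) (c : ι → ℝ) (j : ι) :
    fiberSum π (c ∘ π) j = #{v | π v = j} * c j := by
  rw [fiberSum, sum_congr rfl fun v hv => show (c ∘ π) v = c j from congrArg c (mem_filter.mp hv).2,
    sum_const, nsmul_eq_mul]

def quotientMatrix (π : V → ι) (R : ι → ι → Prop) [DecidableRel R] : Matrix ι ι ℝ :=
  of (fun i j => if R i j then (#{v | π v = j} : ℝ) else 0) -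
    diagonal (fun i => if R i i then 1 else 0)

variable [DecidableEq V] [Fintype ι] {π : V → ι} {R : ι → ι → Prop} [DecidableRel R]
  {G : SimpleGraph V}

theorem SimpleGraph.IsBlowup.adjMat_mulVec_apply (hG : G.IsBlowup π R) (w : V → ℝ) (u : V) :
    (adjMat G *ᵥ w) u =
      ∑ j, (if R (π u) j then fiberSum π w j else 0) - if R (π u) (π u) then w u else 0 := by
  have hrow : ∀ v, adjMat G u v * w v = (if R (π u) (π v) then w v else 0) -
      if v = u then (if R (π u) (π u) then w u else 0) else 0 := by
    intro v
    by_cases h : v = u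
    · subst h; simp [adjMat]
    · simp [adjMat, hG u v, h, Ne.symm h]
  have hfib : ∀ j, ∑ v with π v = j, (if R (π u) (π v) then w v else 0) =
      if R (π u) j then fiberSum π w j else 0 := by
    intro j
    split_ifs with h
    · exact sum_congr rfl fun v hv => by rw [(mem_filter.mp hv).2, if_pos h]
    · exact sum_eq_zero fun v hv => by rw [(mem_filter.mp hv).2, if_neg h]
  simp only [mulVec, dotProduct, hrow, sum_sub_distrib, sum_ite_eq', mem_univ, if_true]
  rw [← sum_fiberwise univ π, sum_congr rfl fun j _ => hfib j]

theorem SimpleGraph.IsBlowup.adjMat_mulVec_comp (hG : G.IsBlowup π R) (c : ι → ℝ) :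
    adjMat G *ᵥ (c ∘ π) = (quotientMatrix π R *ᵥ c) ∘ π := by
  funext u
  rw [hG.adjMat_mulVec_apply]
  simp only [quotientMatrix, sub_mulVec, Function.comp_apply, Pi.sub_apply, mulVec_diagonal,
    fiberSum_comp]
  simp only [mulVec, dotProduct, of_apply, ite_mul, zero_mul, one_mul]

theorem SimpleGraph.IsBlowup.mem_spectrum_adjMat (hπ : Function.Surjective π)
    (hG : G.IsBlowup π R) {x : ℝ} (hx : x ∈ spectrum ℝ (quotientMatrix π R)) :
    x ∈ spectrum ℝ (adjMat G) := by
  obtain ⟨c, hc0, hc⟩ := (mem_spectrum_iff_exists_mulVec_eq_smul_s10 _ x).mp hx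
  refine (mem_spectrum_iff_exists_mulVec_eq_smul_s10 _ x).mpr ⟨c ∘ π, ?_, ?_⟩
  · exact fun h => hc0 (hπ.injective_comp_right h)
  · rw [hG.adjMat_mulVec_comp, hc]
    rfl

theorem SimpleGraph.IsBlowup.mem_spectrum_quotientMatrix (hπ : Function.Surjective π)
    (hG : G.IsBlowup π R) {x : ℝ} (hx : x ∈ spectrum ℝ (adjMat G)) (hx0 : x ≠ 0)
    (hx1 : x ≠ -1) : x ∈ spectrum ℝ (quotientMatrix π R) := by
  obtain ⟨w, hw0, hw⟩ := (mem_spectrum_iff_exists_mulVec_eq_smul_s10 _ x).mp hx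
  set c : ι → ℝ := fun i =>
    (∑ j, if R i j then fiberSum π w j else 0) / (x + if R i i then 1 else 0)
  have hwc : w = c ∘ π := by
    funext u
    have hu := congrFun hw u
    rw [hG.adjMat_mulVec_apply, Pi.smul_apply, smul_eq_mul] at hu
    have hden : x + (if R (π u) (π u) then 1 else 0) ≠ 0 := by
      split_ifs
      · exact fun h => hx1 (eq_neg_of_add_eq_zero_left h)
      · simpa using hx0
    rw [Function.comp_apply, eq_div_iff hden]
    split_ifs at hu ⊢ <;> linarith
  refine (mem_spectrum_iff_exists_mulVec_eq_smul_s10 _ x).mpr ⟨c, fun hc => hw0 ?_, ?_⟩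
  · rw [hwc, hc]
    rfl
  · apply hπ.injective_comp_right
    change (quotientMatrix π R *ᵥ c) ∘ π = (x • c) ∘ π
    rw [← hG.adjMat_mulVec_comp, ← hwc, hw, hwc]
    rfl

theorem SimpleGraph.IsBlowup.isGreatest_spectrum_quotientMatrix (hπ : Function.Surjective π)
    (hG : G.IsBlowup π R) {r : ℝ} (hr0 : 0 ≤ r) (hr : r ∈ spectrum ℝ (quotientMatrix π R)) :
    IsGreatest (spectrum ℝ (quotientMatrix π R)) (grho G) := by
  have hsub : spectrum ℝ (quotientMatrix π R) ⊆ spectrum ℝ (adjMat G) := fun _ hx =>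
    hG.mem_spectrum_adjMat hπ hx
  have hfin := finite_spectrum (adjMat G)
  have hρ : grho G ∈ spectrum ℝ (adjMat G) := Set.Nonempty.csSup_mem ⟨r, hsub hr⟩ hfin
  have hle : ∀ x ∈ spectrum ℝ (quotientMatrix π R), x ≤ grho G := fun _ hx =>
    le_csSup hfin.bddAbove (hsub hx)
  refine ⟨?_, hle⟩
  rcases (hr0.trans (hle r hr)).eq_or_lt with h0 | hpos
  · have hr_eq : r = 0 := le_antisymm (h0 ▸ hle r hr) hr0
    rwa [← h0, ← hr_eq]
  · exact hG.mem_spectrum_quotientMatrix hπ hρ hpos.ne' (by linarith)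

end Blowup

/-- Class `0` is the dominating `K_s`, class `1` the `a` isolated vertices and class `2` the
remaining clique. -/
def joinClass (s a : ℕ) {n : ℕ} (u : Fin n) : Fin 3 :=
  if (u : ℕ) < s then 0 else if (u : ℕ) < s + a then 1 else 2

def joinPattern (i j : Fin 3) : Prop := i = 0 ∨ j = 0 ∨ (i = 2 ∧ j = 2)

instance : DecidableRel joinPattern := fun _ _ => by unfold joinPattern; infer_instance

section joinClass

variable {n s a : ℕ}

theorem joinClass_eq_zero_iff (u : Fin n) : joinClass s a u = 0 ↔ (u : ℕ) < s := by
  unfold joinClass; split_ifs <;> simp_all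

theorem joinClass_eq_one_iff (u : Fin n) :
    joinClass s a u = 1 ↔ s ≤ (u : ℕ) ∧ (u : ℕ) < s + a := by
  unfold joinClass; split_ifs <;> simp_all

theorem joinClass_eq_two_iff (u : Fin n) : joinClass s a u = 2 ↔ s + a ≤ (u : ℕ) := by
  unfold joinClass; split_ifs <;> simp_all; omega

theorem Hgen_isBlowup : (Hgen n s a 1).IsBlowup (joinClass s a) joinPattern := by
  intro u v
  simp only [Hgen, joinPattern, joinClass_eq_zero_iff, joinClass_eq_two_iff, mul_one, Nat.div_one]
  constructor
  · rintro ⟨huv, h | h | h | h⟩ <;> [tauto; tauto; tauto; omega]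
  · tauto

theorem joinClass_surjective (hs : 0 < s) (ha : 0 < a) (hn : s + a < n) :
    Function.Surjective (joinClass s a : Fin n → Fin 3) := by
  intro j
  fin_cases j
  · exact ⟨⟨0, by omega⟩, (joinClass_eq_zero_iff _).mpr hs⟩
  · exact ⟨⟨s, by omega⟩, (joinClass_eq_one_iff _).mpr ⟨le_rfl, by simp; omega⟩⟩
  · exact ⟨⟨s + a, hn⟩, (joinClass_eq_two_iff _).mpr le_rfl⟩

theorem card_joinClass_eq (h : s + a ≤ n) (j : Fin 3) :
    #{u : Fin n | joinClass s a u = j} = ![s, a, n - (s + a)] j := by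
  fin_cases j
  · simpa [joinClass_eq_zero_iff] using
      Fin.card_filter_le_val_and_val_lt (lo := 0) (h.trans' (Nat.le_add_right s a))
  · simpa [joinClass_eq_one_iff] using Fin.card_filter_le_val_and_val_lt (lo := s) h
  · simpa [joinClass_eq_two_iff] using Fin.card_filter_le_val_and_val_lt (lo := s + a) le_rfl

end joinClass

/-- The characteristic polynomial of `[[s-1, a, b], [s, 0, 0], [s, 0, b-1]]`. -/
def joinCubic (s a b x : ℝ) : ℝ :=
  (x - s + 1) * x * (x - b + 1) - a * s * (x - b + 1) - b * s * x

theorem mem_spectrum_quotientMatrix_joinClass_iff {n s a : ℕ} (h : s + a ≤ n) (x : ℝ) :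
    x ∈ spectrum ℝ (quotientMatrix (joinClass s a : Fin n → Fin 3) joinPattern) ↔
      joinCubic s a (n - (s + a) : ℕ) x = 0 := by
  rw [mem_spectrum_iff_isRoot_charpoly, Polynomial.IsRoot.def, eval_charpoly, det_fin_three]
  simp [quotientMatrix, joinPattern, card_joinClass_eq h, joinCubic]
  constructor <;> intro h <;> linear_combination h

theorem exists_nonneg_root_joinCubic {s a b : ℝ} (hs : 0 ≤ s) (ha : 0 ≤ a) (hb : 1 ≤ b) :
    ∃ x, 0 ≤ x ∧ joinCubic s a b x = 0 := by
  have hlo : joinCubic s a b (b - 1) ≤ 0 := by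
    have hval : joinCubic s a b (b - 1) = -(b * s * (b - 1)) := by unfold joinCubic; ring
    have hb1 : 0 ≤ b - 1 := by linarith
    rw [hval, neg_nonpos]
    positivity
  have hhi : 0 ≤ joinCubic s a b (s + a + b) := by
    have hval : joinCubic s a b (s + a + b) =
        (a * (a + b) + (s + a + b)) * (s + a + 1) + b * (s + a + b) * (a + 1) := by
      unfold joinCubic; ring
    have hb0 : 0 ≤ b := by linarith
    rw [hval]
    positivity
  have hcont : Continuous (joinCubic s a b) := by unfold joinCubic; fun_prop
  obtain ⟨x, hx, hx0⟩ := intermediate_value_Icc (by linarith) hcont.continuousOn ⟨hlo, hhi⟩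
  exact ⟨x, by linarith [hx.1], hx0⟩

theorem isGreatest_joinCubic_grho {n s a : ℕ} (hs : 0 < s) (ha : 0 < a) (hn : s + a < n) :
    IsGreatest {x | joinCubic s a (n - (s + a) : ℕ) x = 0} (grho (Hgen n s a 1)) := by
  have hroots : {x | joinCubic s a (n - (s + a) : ℕ) x = 0} =
      spectrum ℝ (quotientMatrix (joinClass s a : Fin n → Fin 3) joinPattern) :=
    Set.ext fun x => (mem_spectrum_quotientMatrix_joinClass_iff hn.le x).symm
  obtain ⟨r, hr0, hr⟩ := exists_nonneg_root_joinCubic (s := s) (a := a) (b := (n - (s + a) : ℕ))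
    (Nat.cast_nonneg _) (Nat.cast_nonneg _) (by norm_cast; omega)
  rw [hroots]
  exact Hgen_isBlowup.isGreatest_spectrum_quotientMatrix (joinClass_surjective hs ha hn) hr0
    ((mem_spectrum_quotientMatrix_joinClass_iff hn.le r).mpr hr)

/-- `ρ(K_s ∨ ((s-k+1) K_1 ∪ K_{n-2s+k-1}))` is the largest real root of `f_s`. -/
theorem stmt_10 (s k n : ℕ) (hs : 1 ≤ s) (hk : k ≤ s) (hn : (2 * s : ℤ) - k + 2 ≤ n) :
    IsGreatest {x : ℝ | x ^ 3 - ((n : ℝ) + (k : ℝ) - (s : ℝ) - 3) * x ^ 2 - ((n : ℝ) + (s : ℝ) ^ 2 - (k : ℝ) * (s : ℝ) + (k : ℝ) - 2) * x - 2 * (s : ℝ) ^ 3 + ((n : ℝ) + 3 * (k : ℝ) - 4) * (s : ℝ) ^ 2 + ((n : ℝ) + 3 * (k : ℝ) - (n : ℝ) * (k : ℝ) - (k : ℝ) ^ 2 - 2) * (s : ℝ) = 0} (grho (Hgen n s (s - k + 1) 1)) := by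
  have hsa : s + (s - k + 1) < n := by omega
  convert isGreatest_joinCubic_grho hs (Nat.succ_pos _) hsa using 1
  ext x
  simp only [Set.mem_ofPred_eq, joinCubic]
  push_cast [Nat.cast_sub hk, Nat.cast_sub hsa.le]
  constructor <;> intro h <;> linear_combination h
end

section
/- Let δ, s, k, n be integers with δ ≥ 1, 0 ≤ k < δ, n ≥ 9δ−2k+12, and δ+1 ≤ s ≤ (n+k−2)/2. Define, for an integer parameter m ≥ 1, g_m(x) = x³ − (3n+2k−m−6)x² + (2n² + mn + 2kn − 8n − 4m² + 4(k−1)m − 4k + 8)x − 2m³ + (4n+4k−10)m² − (2n² + 4kn − 10n + 2k² − 10k + 12)m. Then g_s(x) > g_δ(x) for every real number x ≥ 2n−2δ+2k−4. -/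
/-!
`g_s - g_δ` factors as `(s - δ)` times a monic quadratic in `x`. That quadratic is positive at
`x₀ = 2n - 2δ + 2k - 4`, and `x₀` lies to the right of its vertex, so it stays positive on `[x₀, ∞)`.
-/

/-- The polynomial `g_m`, with `n`, `k` and `m` taken real. -/
def quotientCharPoly (n k m x : ℝ) : ℝ :=
  x ^ 3 - (3 * n + 2 * k - m - 6) * x ^ 2
    + (2 * n ^ 2 + m * n + 2 * k * n - 8 * n - 4 * m ^ 2 + 4 * (k - 1) * m - 4 * k + 8) * x
    - 2 * m ^ 3 + (4 * n + 4 * k - 10) * m ^ 2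
    - (2 * n ^ 2 + 4 * k * n - 10 * n + 2 * k ^ 2 - 10 * k + 12) * m

def quotientCharPolyDivDiff (n k s d x : ℝ) : ℝ :=
  x ^ 2 + (n - 4 * (s + d) + 4 * k - 4) * x
    + (-2 * (s ^ 2 + s * d + d ^ 2) + (4 * n + 4 * k - 10) * (s + d)
      - (2 * n ^ 2 + 4 * k * n - 10 * n + 2 * k ^ 2 - 10 * k + 12))

theorem quotientCharPoly_sub (n k s d x : ℝ) :
    quotientCharPoly n k s x - quotientCharPoly n k d x =
      (s - d) * quotientCharPolyDivDiff n k s d x := by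
  unfold quotientCharPoly quotientCharPolyDivDiff
  ring

theorem monic_quadratic_le_of_vertex_le {b c x₀ x : ℝ} (hvertex : 0 ≤ 2 * x₀ + b) (hx : x₀ ≤ x) :
    x₀ ^ 2 + b * x₀ + c ≤ x ^ 2 + b * x + c := by
  nlinarith [mul_nonneg (sub_nonneg.2 hx) (by linarith : 0 ≤ x + x₀ + b)]

section
variable {n k s d : ℝ} (hk0 : 0 ≤ k) (hk : k + 1 ≤ d)
  (hn : 9 * d - 2 * k + 12 ≤ n) (hs1 : d + 1 ≤ s) (hs2 : 2 * s ≤ n + k - 2)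
include hk0 hk hn hs1 hs2

theorem quotientCharPolyDivDiff_pos_at_threshold :
    0 < quotientCharPolyDivDiff n k s d (2 * n - 2 * d + 2 * k - 4) := by
  unfold quotientCharPolyDivDiff
  have hA : 0 ≤ n + k - 2 - 2 * s := by linarith
  have hE : 0 ≤ s - d - 1 := by linarith
  have hb : 0 ≤ n - 9 * d + 2 * k - 12 := by linarith
  have hd0 : 0 ≤ d := by linarith
  nlinarith [mul_nonneg hA hE, mul_nonneg hA (by linarith : 0 ≤ 5 * n + 5 * k - 4 * d - 6),
    mul_nonneg hb hb, mul_nonneg hb hd0, mul_nonneg hb hk0,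
    mul_nonneg hk0 (by linarith : 0 ≤ d - 1 - k), mul_nonneg hd0 hd0, mul_nonneg hd0 hk0]

theorem quotientCharPolyDivDiff_pos {x : ℝ} (hx : 2 * n - 2 * d + 2 * k - 4 ≤ x) :
    0 < quotientCharPolyDivDiff n k s d x :=
  (quotientCharPolyDivDiff_pos_at_threshold hk0 hk hn hs1 hs2).trans_le
    (monic_quadratic_le_of_vertex_le (by linarith) hx)

theorem quotientCharPoly_lt {x : ℝ} (hx : 2 * n - 2 * d + 2 * k - 4 ≤ x) :
    quotientCharPoly n k d x < quotientCharPoly n k s x := by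
  rw [← sub_pos, quotientCharPoly_sub]
  exact mul_pos (by linarith) (quotientCharPolyDivDiff_pos hk0 hk hn hs1 hs2 hx)

end

theorem stmt_16_general (δ s k n : ℤ) (hk0 : 0 ≤ k) (hk : k < δ)
    (hn : 9 * δ - 2 * k + 12 ≤ n) (hs1 : δ + 1 ≤ s) (hs2 : 2 * s ≤ n + k - 2) :
    ∀ x : ℝ, 2 * (n : ℝ) - 2 * (δ : ℝ) + 2 * (k : ℝ) - 4 ≤ x →
      x ^ 3 - (3 * (n : ℝ) + 2 * (k : ℝ) - (δ : ℝ) - 6) * x ^ 2 + (2 * (n : ℝ) ^ 2 + (δ : ℝ) * (n : ℝ) + 2 * (k : ℝ) * (n : ℝ) - 8 * (n : ℝ) - 4 * (δ : ℝ) ^ 2 + 4 * ((k : ℝ) - 1) * (δ : ℝ) - 4 * (k : ℝ) + 8) * x - 2 * (δ : ℝ) ^ 3 + (4 * (n : ℝ) + 4 * (k : ℝ) - 10) * (δ : ℝ) ^ 2 - (2 * (n : ℝ) ^ 2 + 4 * (k : ℝ) * (n : ℝ) - 10 * (n : ℝ) + 2 * (k : ℝ) ^ 2 - 10 * (k : ℝ)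 + 12) * (δ : ℝ)
      < x ^ 3 - (3 * (n : ℝ) + 2 * (k : ℝ) - (s : ℝ) - 6) * x ^ 2 + (2 * (n : ℝ) ^ 2 + (s : ℝ) * (n : ℝ) + 2 * (k : ℝ) * (n : ℝ) - 8 * (n : ℝ) - 4 * (s : ℝ) ^ 2 + 4 * ((k : ℝ) - 1) * (s : ℝ) - 4 * (k : ℝ) + 8) * x - 2 * (s : ℝ) ^ 3 + (4 * (n : ℝ) + 4 * (k : ℝ) - 10) * (s : ℝ) ^ 2 - (2 * (n : ℝ) ^ 2 + 4 * (k : ℝ) * (n : ℝ) - 10 * (n : ℝ) + 2 * (k : ℝ) ^ 2 - 10 * (k : ℝ) + 12) * (s : ℝ) := by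
  intro x hx
  have hk' : (k : ℝ) + 1 ≤ δ := by exact_mod_cast hk
  exact quotientCharPoly_lt (by exact_mod_cast hk0) hk' (by exact_mod_cast hn)
    (by exact_mod_cast hs1) (by exact_mod_cast hs2) hx

/-- The key polynomial inequality in the proof of Lemma 3.4: `g_δ(x) < g_s(x)` for
`x ≥ 2n - 2δ + 2k - 4`. -/
theorem stmt_16 (δ s k n : ℤ) (hδ : 1 ≤ δ) (hk0 : 0 ≤ k) (hk : k < δ)
    (hn : 9 * δ - 2 * k + 12 ≤ n) (hs1 : δ + 1 ≤ s) (hs2 : 2 * s ≤ n + k - 2) :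
    ∀ x : ℝ, 2 * (n : ℝ) - 2 * (δ : ℝ) + 2 * (k : ℝ) - 4 ≤ x →
      x ^ 3 - (3 * (n : ℝ) + 2 * (k : ℝ) - (δ : ℝ) - 6) * x ^ 2 + (2 * (n : ℝ) ^ 2 + (δ : ℝ) * (n : ℝ) + 2 * (k : ℝ) * (n : ℝ) - 8 * (n : ℝ) - 4 * (δ : ℝ) ^ 2 + 4 * ((k : ℝ) - 1) * (δ : ℝ) - 4 * (k : ℝ) + 8) * x - 2 * (δ : ℝ) ^ 3 + (4 * (n : ℝ) + 4 * (k : ℝ) - 10) * (δ : ℝ) ^ 2 - (2 * (n : ℝ) ^ 2 + 4 * (k : ℝ) * (n : ℝ) - 10 * (n : ℝ) + 2 * (k : ℝ) ^ 2 - 10 * (k : ℝ) + 12) * (δ : ℝ)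
      < x ^ 3 - (3 * (n : ℝ) + 2 * (k : ℝ) - (s : ℝ) - 6) * x ^ 2 + (2 * (n : ℝ) ^ 2 + (s : ℝ) * (n : ℝ) + 2 * (k : ℝ) * (n : ℝ) - 8 * (n : ℝ) - 4 * (s : ℝ) ^ 2 + 4 * ((k : ℝ) - 1) * (s : ℝ) - 4 * (k : ℝ) + 8) * x - 2 * (s : ℝ) ^ 3 + (4 * (n : ℝ) + 4 * (k : ℝ) - 10) * (s : ℝ) ^ 2 - (2 * (n : ℝ) ^ 2 + 4 * (k : ℝ) * (n : ℝ) - 10 * (n : ℝ) + 2 * (k : ℝ) ^ 2 - 10 * (k : ℝ) + 12) * (s : ℝ) :=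
  stmt_16_general δ s k n hk0 hk hn hs1 hs2
end
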